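/- Let Γ = 6γ/7 and define Z₁ = (1−V²)^((2−γ)/2) · Ω^(1−Γ) / (G₊^(1−Γ) · V^Γ). Along any solution of the tilted Bianchi type VIII dynamical system with Ω(τ) > 0 and 0 < V(τ)² < 1 for all τ, Z₁ is differentiable and satisfies Z₁' = [2(1−Γ)q + (2+2Γ−3γ) + Γ·(W/V²)]·Z₁. -/

import Mathlib

noncomputable section

open Complex Filter

/-- State of the tilted Bianchi type VIII dynamical system (F-gauge):
real variables `Sp`, `Nb` (= N̄), `N1`, `Om`, `v1` and complex variables
`Sx` (= Σ×), `S1`, `Nx` (= N×), `v`, all functions of the dynamical time τ. -/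
structure BianchiVIII (γ : ℝ) (I : Set ℝ) where
  Sp : ℝ → ℝ
  Sx : ℝ → ℂ
  S1 : ℝ → ℂ
  Nx : ℝ → ℂ
  Nb : ℝ → ℝ
  N1 : ℝ → ℝ
  Om : ℝ → ℝ
  v1 : ℝ → ℝ
  v : ℝ → ℂ

namespace BianchiVIII

variable {γ : ℝ} {I : Set ℝ}

/-- Σ² = Σ₊² + |Σ×|² + |Σ₁|² -/
def Sig2 (S : BianchiVIII γ I) (τ : ℝ) : ℝ :=
  S.Sp τ ^ 2 + ‖S.Sx τ‖ ^ 2 + ‖S.S1 τ‖ ^ 2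

/-- V² = v₁² + |v|² -/
def V2 (S : BianchiVIII γ I) (τ : ℝ) : ℝ :=
  S.v1 τ ^ 2 + ‖S.v τ‖ ^ 2

/-- The tilt speed V = √(V²). -/
def V (S : BianchiVIII γ I) (τ : ℝ) : ℝ := Real.sqrt (S.V2 τ)

/-- G₊ = 1 + (γ−1)V² -/
def Gp (S : BianchiVIII γ I) (τ : ℝ) : ℝ := 1 + (γ - 1) * S.V2 τ

/-- Deceleration parameter q = 2Σ² + (1/2)((3γ−2)+(2−γ)V²)Om/G₊ -/
def q (S : BianchiVIII γ I) (τ : ℝ) : ℝ :=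
  2 * S.Sig2 τ + (1/2) * ((3*γ - 2) + (2 - γ) * S.V2 τ) * S.Om τ / S.Gp τ

/-- W = V²𝒮 = Σ₊(−2v₁² + |v|²) + 2√3 v₁ Re(conj(Σ₁) v) + √3 Re(Σ× conj(v)²) -/
def W (S : BianchiVIII γ I) (τ : ℝ) : ℝ :=
  S.Sp τ * (-2 * S.v1 τ ^ 2 + ‖S.v τ‖ ^ 2)
    + 2 * Real.sqrt 3 * S.v1 τ * ((starRingEnd ℂ) (S.S1 τ) * S.v τ).re
    + Real.sqrt 3 * (S.Sx τ * ((starRingEnd ℂ) (S.v τ)) ^ 2).re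

/-- T = ((3γ−4)(1−V²) + (2−γ)W)/(1−(γ−1)V²) -/
def T (S : BianchiVIII γ I) (τ : ℝ) : ℝ :=
  ((3*γ - 4) * (1 - S.V2 τ) + (2 - γ) * S.W τ) / (1 - (γ - 1) * S.V2 τ)

/-- a = (N̄²−N₁²−|N×|²)/((N̄−N₁)²−|N×|²) -/
def a (S : BianchiVIII γ I) (τ : ℝ) : ℝ :=
  (S.Nb τ ^ 2 - S.N1 τ ^ 2 - ‖S.Nx τ‖ ^ 2) /
    ((S.Nb τ - S.N1 τ) ^ 2 - ‖S.Nx τ‖ ^ 2)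

/-- b = −2N₁N×/((N̄−N₁)²−|N×|²) -/
def b (S : BianchiVIII γ I) (τ : ℝ) : ℂ :=
  ((-2 * S.N1 τ : ℝ) : ℂ) * S.Nx τ /
    (((S.Nb τ - S.N1 τ) ^ 2 - ‖S.Nx τ‖ ^ 2 : ℝ) : ℂ)

/-- R = aΣ₁ + b·conj(Σ₁) -/
def R (S : BianchiVIII γ I) (τ : ℝ) : ℂ :=
  (S.a τ : ℂ) * S.S1 τ + S.b τ * (starRingEnd ℂ) (S.S1 τ)

/-- The evolution equations and the constraints of the tilted Bianchi
type VIII dynamical system, holding at each τ in the interval `I`. -/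
structure IsSolution (S : BianchiVIII γ I) : Prop where
  hSp : ∀ τ ∈ I, HasDerivAt S.Sp
    ((S.q τ - 2) * S.Sp τ + 3 * ((starRingEnd ℂ) (S.R τ) * S.S1 τ).re
      - S.N1 τ * S.Nb τ - 2 * ‖S.Nx τ‖ ^ 2
      + γ * S.Om τ / (2 * S.Gp τ) * (-2 * S.v1 τ ^ 2 + ‖S.v τ‖ ^ 2)) τ
  hSx : ∀ τ ∈ I, HasDerivAt S.Sx
    (((S.q τ - 2 : ℝ) : ℂ) * S.Sx τ + (Real.sqrt 3 : ℂ) * S.S1 τ * S.R τ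
      - (Real.sqrt 3 : ℂ) * S.Nx τ * ((2 * S.Nb τ - S.N1 τ : ℝ) : ℂ)
      + ((Real.sqrt 3 * γ * S.Om τ / (2 * S.Gp τ) : ℝ) : ℂ) * (S.v τ) ^ 2) τ
  hS1 : ∀ τ ∈ I, HasDerivAt S.S1
    (((S.q τ - 2 : ℝ) : ℂ) * S.S1 τ - ((3 * S.Sp τ : ℝ) : ℂ) * S.R τ
      - (Real.sqrt 3 : ℂ) * S.Sx τ * (starRingEnd ℂ) (S.R τ)
      + ((Real.sqrt 3 * γ * S.Om τ * S.v1 τ / S.Gp τ : ℝ) : ℂ) * S.v τ) τ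
  hNx : ∀ τ ∈ I, HasDerivAt S.Nx
    (((S.q τ + 2 * S.Sp τ : ℝ) : ℂ) * S.Nx τ
      + ((2 * Real.sqrt 3 : ℝ) : ℂ) * S.Sx τ * ((S.Nb τ : ℝ) : ℂ)) τ
  hNb : ∀ τ ∈ I, HasDerivAt S.Nb
    ((S.q τ + 2 * S.Sp τ) * S.Nb τ
      + 2 * Real.sqrt 3 * ((starRingEnd ℂ) (S.Sx τ) * S.Nx τ).re) τ
  hN1 : ∀ τ ∈ I, HasDerivAt S.N1 ((S.q τ - 4 * S.Sp τ) * S.N1 τ) τ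
  hOm : ∀ τ ∈ I, HasDerivAt S.Om
    (S.Om τ / S.Gp τ * (2 * S.q τ - (3*γ - 2)
      + (2 * S.q τ * (γ - 1) - (2 - γ)) * S.V2 τ - γ * S.W τ)) τ
  hv1 : ∀ τ ∈ I, HasDerivAt S.v1
    ((S.T τ + 2 * S.Sp τ) * S.v1 τ
      - Real.sqrt 3 * ((S.R τ + S.S1 τ) * (starRingEnd ℂ) (S.v τ)).re
      + Real.sqrt 3 * ((starRingEnd ℂ) (S.Nx τ) * (S.v τ) ^ 2).im) τ
  hv : ∀ τ ∈ I, HasDerivAt S.v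
    ((((S.T τ - S.Sp τ : ℝ) : ℂ)
        - Complex.I * (Real.sqrt 3 : ℂ) * ((S.Nb τ - S.N1 τ : ℝ) : ℂ) * (S.v1 τ : ℂ)) * S.v τ
      - (Real.sqrt 3 : ℂ) * (S.Sx τ + Complex.I * S.Nx τ * (S.v1 τ : ℂ)) * (starRingEnd ℂ) (S.v τ)
      - (Real.sqrt 3 : ℂ) * (S.S1 τ - S.R τ) * (S.v1 τ : ℂ)) τ
  hC1 : ∀ τ ∈ I, 1 = S.Sig2 τ + (1/4) * S.N1 τ ^ 2 - S.N1 τ * S.Nb τ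
      + ‖S.Nx τ‖ ^ 2 + S.Om τ
  hC2 : ∀ τ ∈ I, 0 = 2 * ((starRingEnd ℂ) (S.Sx τ) * S.Nx τ).im
      + γ * S.Om τ * S.v1 τ / S.Gp τ
  hC3 : ∀ τ ∈ I, (0 : ℂ) = Complex.I * S.S1 τ * ((S.Nb τ - S.N1 τ : ℝ) : ℂ)
      + Complex.I * (starRingEnd ℂ) (S.S1 τ) * S.Nx τ
      + ((γ * S.Om τ / S.Gp τ : ℝ) : ℂ) * S.v τ

/-- Type VIII conditions: N₁ < 0, N̄ > 0, N̄² − |N×|² > 0, Om ≥ 0, V² < 1. -/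
def IsTypeVIII (S : BianchiVIII γ I) : Prop :=
  ∀ τ ∈ I, S.N1 τ < 0 ∧ 0 < S.Nb τ ∧ 0 < S.Nb τ ^ 2 - ‖S.Nx τ‖ ^ 2
    ∧ 0 ≤ S.Om τ ∧ S.V2 τ < 1

/-- D = N₁v₁² + N̄|v|² + Re(conj(N×) v²) -/
def D (S : BianchiVIII γ I) (τ : ℝ) : ℝ :=
  S.N1 τ * S.v1 τ ^ 2 + S.Nb τ * ‖S.v τ‖ ^ 2
    + ((starRingEnd ℂ) (S.Nx τ) * (S.v τ) ^ 2).re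

end BianchiVIII

/-- Z₁ = (1−V²)^((2−γ)/2) · Ω^(1−Γ) / (G₊^(1−Γ) · V^Γ), with Γ = 6γ/7. -/
noncomputable def Z1 {γ : ℝ} {I : Set ℝ} (S : BianchiVIII γ I) (τ : ℝ) : ℝ :=
  (1 - S.V2 τ) ^ ((2 - γ)/2) * S.Om τ ^ (1 - 6*γ/7) /
    (S.Gp τ ^ (1 - 6*γ/7) * S.V τ ^ (6*γ/7))

/-!
Z is a product of real powers of 1 − V², Ω, G₊ and V, so its logarithmic derivative is the
matching combination of the logarithmic derivatives of these factors. The evolution equations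
give (V²)' = 2(TV² − W), in which the N× and R terms of v₁' and v' cancel, and Ω'/Ω directly;
the resulting rational expression in V², W, q collapses because
TV² − W = (1 − V²)((3γ − 4)V² − W)/(1 − (γ − 1)V²). The identity holds for every exponent Γ,
not only Γ = 6γ/7.
-/

section LogDeriv

variable {𝕜 : Type*} [NontriviallyNormedField 𝕜] {f g : 𝕜 → 𝕜} {a b x : 𝕜}

theorem HasDerivAt.mul_logDeriv (hf : HasDerivAt f (a * f x) x) (hg : HasDerivAt g (b * g x) x) :
    HasDerivAt (fun t => f t * g t) ((a + b) * (f x * g x)) x :=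
  (hf.mul hg).congr_deriv (by ring)

theorem HasDerivAt.div_logDeriv (hf : HasDerivAt f (a * f x) x) (hg : HasDerivAt g (b * g x) x)
    (hx : g x ≠ 0) : HasDerivAt (fun t => f t / g t) ((a - b) * (f x / g x)) x :=
  (hf.div hg hx).congr_deriv (by field_simp)

end LogDeriv

section RpowLogDeriv

variable {f : ℝ → ℝ} {f' x : ℝ}

theorem HasDerivAt.rpow_const_logDeriv (p : ℝ) (hf : HasDerivAt f f' x) (hx : f x ≠ 0) :
    HasDerivAt (fun t => f t ^ p) (p * (f' / f x) * f x ^ p) x :=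
  (hf.rpow_const (Or.inl hx)).congr_deriv (by rw [Real.rpow_sub_one hx]; ring)

theorem HasDerivAt.sqrt_rpow_const_logDeriv (p : ℝ) (hf : HasDerivAt f f' x) (hx : 0 < f x) :
    HasDerivAt (fun t => √(f t) ^ p) (p / 2 * (f' / f x) * √(f x) ^ p) x := by
  have hs : √(f x) ≠ 0 := (Real.sqrt_pos.2 hx).ne'
  refine ((hf.sqrt hx.ne').rpow_const_logDeriv p hs).congr_deriv ?_
  field_simp
  rw [Real.sq_sqrt hx.le]

end RpowLogDeriv

namespace BianchiVIII

variable {γ : ℝ} {I : Set ℝ} {S : BianchiVIII γ I} {τ : ℝ}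

theorem hasDerivAt_V2 (hsol : S.IsSolution) (hτ : τ ∈ I) :
    HasDerivAt S.V2 (2 * (S.T τ * S.V2 τ - S.W τ)) τ := by
  refine (((hsol.hv1 τ hτ).pow 2).add (hsol.hv τ hτ).norm_sq).congr_deriv ?_
  simp only [V2, W, Complex.inner, Complex.normSq_apply, Complex.mul_re,
    Complex.mul_im, Complex.add_re, Complex.add_im, Complex.sub_re, Complex.sub_im,
    Complex.ofReal_re, Complex.ofReal_im, Complex.I_re, Complex.I_im, Complex.conj_re,
    Complex.conj_im, Complex.norm_mul_self_eq_normSq, sq]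
  ring

theorem V2_nonneg : 0 ≤ S.V2 τ := by unfold V2; positivity

theorem Gp_pos (hγ : 0 ≤ γ) (hV : S.V2 τ < 1) : 0 < S.Gp τ := by
  unfold Gp; nlinarith [S.V2_nonneg (τ := τ)]

theorem hasDerivAt_Gp (hsol : S.IsSolution) (hτ : τ ∈ I) :
    HasDerivAt S.Gp ((γ - 1) * (2 * (S.T τ * S.V2 τ - S.W τ))) τ :=
  ((hasDerivAt_V2 hsol hτ).const_mul (γ - 1)).const_add 1

theorem T_mul_V2_sub_W (h : 1 - (γ - 1) * S.V2 τ ≠ 0) :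
    S.T τ * S.V2 τ - S.W τ
      = (1 - S.V2 τ) * ((3*γ - 4) * S.V2 τ - S.W τ) / (1 - (γ - 1) * S.V2 τ) := by
  unfold T
  generalize hd : 1 - (γ - 1) * S.V2 τ = d at h ⊢
  field_simp
  rw [← hd]
  ring

theorem logDeriv_Z_eq (Γ : ℝ) (hγ0 : 0 ≤ γ) (hγ2 : γ ≤ 2) (hV0 : 0 < S.V2 τ) (hV1 : S.V2 τ < 1)
    (hOm : S.Om τ ≠ 0) :
    (2 - γ) / 2 * (-(2 * (S.T τ * S.V2 τ - S.W τ)) / (1 - S.V2 τ))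
      + (1 - Γ) * (S.Om τ / S.Gp τ * (2 * S.q τ - (3*γ - 2)
          + (2 * S.q τ * (γ - 1) - (2 - γ)) * S.V2 τ - γ * S.W τ) / S.Om τ)
      - ((1 - Γ) * ((γ - 1) * (2 * (S.T τ * S.V2 τ - S.W τ)) / S.Gp τ)
        + Γ / 2 * (2 * (S.T τ * S.V2 τ - S.W τ) / S.V2 τ))
      = 2 * (1 - Γ) * S.q τ + (2 + 2*Γ - 3*γ) + Γ * (S.W τ / S.V2 τ) := by
  have hG := (Gp_pos hγ0 hV1).ne'
  have hT : 1 - (γ - 1) * S.V2 τ ≠ 0 := by nlinarith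
  have hA : 1 - S.V2 τ ≠ 0 := by linarith
  rw [T_mul_V2_sub_W hT]
  generalize hd : 1 - (γ - 1) * S.V2 τ = d at hT ⊢
  field_simp
  rw [← hd]
  unfold Gp
  ring

def Z (Γ : ℝ) (S : BianchiVIII γ I) (τ : ℝ) : ℝ :=
  (1 - S.V2 τ) ^ ((2 - γ) / 2) * S.Om τ ^ (1 - Γ) / (S.Gp τ ^ (1 - Γ) * S.V τ ^ Γ)

theorem hasDerivAt_Z (Γ : ℝ) (hγ0 : 0 ≤ γ) (hγ2 : γ ≤ 2) (hsol : S.IsSolution) (hτ : τ ∈ I)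
    (hOm : 0 < S.Om τ) (hV0 : 0 < S.V2 τ) (hV1 : S.V2 τ < 1) :
    HasDerivAt (S.Z Γ)
      ((2 * (1 - Γ) * S.q τ + (2 + 2*Γ - 3*γ) + Γ * (S.W τ / S.V2 τ)) * S.Z Γ τ) τ := by
  have hV2 := hasDerivAt_V2 hsol hτ
  have hG := Gp_pos hγ0 hV1
  have hA := (hV2.const_sub 1).rpow_const_logDeriv ((2 - γ) / 2) (by linarith)
  have hO := (hsol.hOm τ hτ).rpow_const_logDeriv (1 - Γ) hOm.ne'
  have hGΓ := (hasDerivAt_Gp hsol hτ).rpow_const_logDeriv (1 - Γ) hG.ne'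
  have hU := hV2.sqrt_rpow_const_logDeriv Γ hV0
  have hden : S.Gp τ ^ (1 - Γ) * S.V τ ^ Γ ≠ 0 :=
    (mul_pos (Real.rpow_pos_of_pos hG _) (Real.rpow_pos_of_pos (Real.sqrt_pos.2 hV0) _)).ne'
  rw [← logDeriv_Z_eq Γ hγ0 hγ2 hV0 hV1 hOm.ne']
  exact (hA.mul_logDeriv hO).div_logDeriv (hGΓ.mul_logDeriv hU) hden

end BianchiVIII

/-- Along any solution of the tilted Bianchi type VIII system
with Ω > 0 and 0 < V² < 1, Z₁ is differentiable and
Z₁' = [2(1−Γ)q + (2+2Γ−3γ) + Γ·(W/V²)]·Z₁, where Γ = 6γ/7. -/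
theorem bianchiVIII_Z1_deriv (γ : ℝ) (hγ0 : 0 < γ) (hγ2 : γ < 2)
    (I : Set ℝ) (S : BianchiVIII γ I) (hsol : S.IsSolution)
    (hOm : ∀ τ ∈ I, 0 < S.Om τ)
    (hV : ∀ τ ∈ I, 0 < S.V2 τ ∧ S.V2 τ < 1) :
    ∀ τ ∈ I, HasDerivAt (Z1 S)
      ((2 * (1 - 6*γ/7) * S.q τ + (2 + 2*(6*γ/7) - 3*γ)
        + (6*γ/7) * (S.W τ / S.V2 τ)) * Z1 S τ) τ := fun τ hτ =>
  S.hasDerivAt_Z (6*γ/7) hγ0.le hγ2.le hsol hτ (hOm τ hτ) (hV τ hτ).1 (hV τ hτ).2
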